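/- arXiv:2109.13648 — 4 statements merged into one kernel-verified Lean document; each statement's English description precedes it below -/
import Mathlib

section
/- Let d = d₁ + d₂ with d₁, d₂ ≥ 1, let μ = (μ₁, μ₂) ∈ ℝ^{d₁} × ℝ^{d₂}, let ν > 2, and let Σ be a symmetric positive definite d×d real matrix with blocks Σ₁₁, Σ₁₂, Σ₁₂ᵀ, Σ₂₂. Define, for x₂ ∈ ℝ^{d₂}, μ_{1|2}(x₂) = μ₁ + Σ₁₂ Σ₂₂⁻¹ (x₂ − μ₂) and Σ_{1|2}(x₂) = ((ν − 2 + (x₂ − μ₂)ᵀ Σ₂₂⁻¹ (x₂ − μ₂)) / (ν − 2 + d₂)) · (Σ₁₁ − Σ₁₂ Σ₂₂⁻¹ Σ₁₂ᵀ). Then Σ_{1|2}(x₂) is symmetric positive definite and for every x = (x₁, x₂) ∈ ℝ^d the joint density factorizes as t_d(x; μ, Σ, ν) = t_{d₁}(x₁; μ_{1|2}(x₂), Σ_{1|2}(x₂), ν + d₂) · t_{d₂}(x₂; μ₂, Σ₂₂, ν). -/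
open MeasureTheory Matrix

/-- Normalizing constant of the Student's t density in the covariance parametrization. -/
noncomputable def tConst (d : ℕ) (ν : ℝ) : ℝ :=
  Real.Gamma ((d + ν) / 2) / (Real.sqrt (Real.pi ^ d * (ν - 2) ^ d) * Real.Gamma (ν / 2))

/-- Student's t density in the covariance parametrization. -/
noncomputable def tDens {n : Type*} [Fintype n] [DecidableEq n] (μ : n → ℝ)
    (S : Matrix n n ℝ) (ν : ℝ) (y : n → ℝ) : ℝ :=
  tConst (Fintype.card n) ν * S.det ^ (-(1 : ℝ) / 2) *
    (1 + ((y - μ) ⬝ᵥ (S⁻¹ *ᵥ (y - μ))) / (ν - 2)) ^ (-((Fintype.card n : ℝ) + ν) / 2)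


/-!
Write `S` in block form with Schur complement `E = Σ₁₁ - Σ₁₂ Σ₂₂⁻¹ Σ₁₂ᵀ`. Block inversion splits
the Mahalanobis form of `S` as `q₁ + q₂`, where `q₂` is the form of `Σ₂₂` at `x₂ - μ₂` and `q₁`
that of `E` at `x₁ - μ_{1|2}(x₂)`, while `det S = det Σ₂₂ · det E`. Scaling `E` by
`k = (ν - 2 + q₂) / (ν - 2 + d₂)` turns `q₁` into `q₁ / k` and `det E` into `k^d₁ det E`, and with
`k (ν + d₂ - 2) = ν - 2 + q₂` the factorization becomes an identity between products of powers
of positive reals and Gamma values, checked after taking logarithms.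
-/

namespace Matrix

variable {m n : Type*}

theorem IsSymm.eq_fromBlocks_toBlocks {α : Type*} {M : Matrix (m ⊕ n) (m ⊕ n) α}
    (hM : M.IsSymm) :
    M = Matrix.fromBlocks M.toBlocks₁₁ M.toBlocks₁₂ M.toBlocks₁₂ᵀ M.toBlocks₂₂ := by
  rw [← fromBlocks_toBlocks M] at hM
  rw [(isSymm_fromBlocks_iff.1 hM).2.1, fromBlocks_toBlocks]

theorem PosDef.eq_fromBlocks_toBlocks {M : Matrix (m ⊕ n) (m ⊕ n) ℝ} (hM : M.PosDef) :
    M = fromBlocks M.toBlocks₁₁ M.toBlocks₁₂ M.toBlocks₁₂ᵀ M.toBlocks₂₂ :=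
  (isHermitian_iff_isSymm.1 hM.isHermitian).eq_fromBlocks_toBlocks

theorem PosDef.toBlocks₂₂ {R : Type*} [CommRing R] [PartialOrder R] [StarRing R]
    {M : Matrix (m ⊕ n) (m ⊕ n) R} (hM : M.PosDef) : M.toBlocks₂₂.PosDef :=
  hM.submatrix Sum.inr_injective

variable [Fintype m] [Fintype n] [DecidableEq m] [DecidableEq n]

theorem det_fromBlocks_of_isUnit₂₂ {α : Type*} [CommRing α] (A : Matrix m m α)
    (B : Matrix m n α) (C : Matrix n m α) {D : Matrix n n α} (hD : IsUnit D) :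
    (fromBlocks A B C D).det = D.det * (A - B * D⁻¹ * C).det := by
  have := hD.invertible
  rw [det_fromBlocks₂₂, invOf_eq_nonsing_inv]

open scoped ComplexOrder in
theorem PosDef.schur_complement₂₂ {𝕜 : Type*} [RCLike 𝕜] {A : Matrix m m 𝕜}
    {B : Matrix m n 𝕜} {D : Matrix n n 𝕜} (hM : (fromBlocks A B Bᴴ D).PosDef) (hD : D.PosDef) :
    (A - B * D⁻¹ * Bᴴ).PosDef := by
  have := hD.isUnit.invertible
  have hpsd := (PosDef.fromBlocks₂₂ A B hD).1 hM.posSemidef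
  refine hpsd.posDef_iff_det_ne_zero.2 fun h => hM.det_pos.ne' ?_
  rw [det_fromBlocks_of_isUnit₂₂ A B Bᴴ hD.isUnit, h, mul_zero]

theorem dotProduct_inv_fromBlocks_mulVec {α : Type*} [CommRing α] (A : Matrix m m α)
    (B : Matrix m n α) {D : Matrix n n α} (hD : IsUnit D) (hDsymm : D.IsSymm)
    (hE : IsUnit (A - B * D⁻¹ * Bᵀ)) (u : m → α) (v : n → α) :
    Sum.elim u v ⬝ᵥ ((fromBlocks A B Bᵀ D)⁻¹ *ᵥ Sum.elim u v) =
      (u - B *ᵥ D⁻¹ *ᵥ v) ⬝ᵥ ((A - B * D⁻¹ * Bᵀ)⁻¹ *ᵥ (u - B *ᵥ D⁻¹ *ᵥ v)) +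
        v ⬝ᵥ (D⁻¹ *ᵥ v) := by
  have := hD.invertible
  have : Invertible (A - B * ⅟D * Bᵀ) := by rw [invOf_eq_nonsing_inv]; exact hE.invertible
  have := fromBlocks₂₂Invertible A B Bᵀ D
  have hDinv : (D⁻¹)ᵀ = D⁻¹ := by rw [transpose_nonsing_inv, hDsymm]
  have transpose_dot (N : Matrix m n α) (y : n → α) (z : m → α) :
      N *ᵥ y ⬝ᵥ z = y ⬝ᵥ Nᵀ *ᵥ z := by
    rw [dotProduct_comm, dotProduct_mulVec, ← mulVec_transpose, dotProduct_comm]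
  rw [← invOf_eq_nonsing_inv, invOf_fromBlocks₂₂_eq]
  simp only [invOf_eq_nonsing_inv, fromBlocks_mulVec, sumElim_dotProduct_sumElim, add_mulVec,
    neg_mulVec, mulVec_mulVec, dotProduct_add, dotProduct_neg, dotProduct_sub, sub_dotProduct,
    mulVec_sub, Matrix.mul_assoc, Sum.elim_comp_inl, Sum.elim_comp_inr]
  simp only [transpose_dot, mulVec_mulVec, transpose_mul, hDinv, Matrix.mul_assoc]
  ring

theorem PosDef.dotProduct_inv_mulVec_nonneg {M : Matrix n n ℝ} (hM : M.PosDef) (x : n → ℝ) :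
    0 ≤ x ⬝ᵥ (M⁻¹ *ᵥ x) := by
  simpa only [star_trivial] using hM.inv.posSemidef.dotProduct_mulVec_nonneg x

variable {M : Matrix (m ⊕ n) (m ⊕ n) ℝ}

theorem PosDef.schur_complement_toBlocks (hM : M.PosDef) :
    (M.toBlocks₁₁ - M.toBlocks₁₂ * M.toBlocks₂₂⁻¹ * M.toBlocks₁₂ᵀ).PosDef := by
  have hM' := hM
  rw [hM.eq_fromBlocks_toBlocks, ← conjTranspose_eq_transpose_of_trivial] at hM'
  simpa only [conjTranspose_eq_transpose_of_trivial] using hM'.schur_complement₂₂ hM.toBlocks₂₂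

theorem PosDef.det_eq_det_toBlocks₂₂_mul (hM : M.PosDef) :
    M.det =
      M.toBlocks₂₂.det * (M.toBlocks₁₁ - M.toBlocks₁₂ * M.toBlocks₂₂⁻¹ * M.toBlocks₁₂ᵀ).det := by
  conv_lhs => rw [hM.eq_fromBlocks_toBlocks]
  exact det_fromBlocks_of_isUnit₂₂ _ _ _ hM.toBlocks₂₂.isUnit

theorem PosDef.dotProduct_inv_mulVec_sumElim (hM : M.PosDef) (u : m → ℝ) (v : n → ℝ) :
    Sum.elim u v ⬝ᵥ (M⁻¹ *ᵥ Sum.elim u v) =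
      (u - M.toBlocks₁₂ *ᵥ M.toBlocks₂₂⁻¹ *ᵥ v) ⬝ᵥ
          ((M.toBlocks₁₁ - M.toBlocks₁₂ * M.toBlocks₂₂⁻¹ * M.toBlocks₁₂ᵀ)⁻¹ *ᵥ
            (u - M.toBlocks₁₂ *ᵥ M.toBlocks₂₂⁻¹ *ᵥ v)) +
        v ⬝ᵥ (M.toBlocks₂₂⁻¹ *ᵥ v) := by
  conv_lhs => rw [hM.eq_fromBlocks_toBlocks]
  exact dotProduct_inv_fromBlocks_mulVec _ _ hM.toBlocks₂₂.isUnit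
    (isHermitian_iff_isSymm.1 hM.toBlocks₂₂.isHermitian) hM.schur_complement_toBlocks.isUnit u v

end Matrix

noncomputable def tDensProfile (d : ℕ) (ν δ q : ℝ) : ℝ :=
  tConst d ν * δ ^ (-(1 : ℝ) / 2) * (1 + q / (ν - 2)) ^ (-((d : ℝ) + ν) / 2)

theorem tDens_eq_tDensProfile {n : Type*} [Fintype n] [DecidableEq n] (μ : n → ℝ)
    (S : Matrix n n ℝ) (ν : ℝ) (y : n → ℝ) :
    tDens μ S ν y =
      tDensProfile (Fintype.card n) ν S.det ((y - μ) ⬝ᵥ (S⁻¹ *ᵥ (y - μ))) :=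
  rfl

theorem tDens_smul {n : Type*} [Fintype n] [DecidableEq n] (μ : n → ℝ) {E : Matrix n n ℝ}
    (hE : IsUnit E.det) {k : ℝ} (hk : k ≠ 0) (ν : ℝ) (y : n → ℝ) :
    tDens μ (k • E) ν y =
      tDensProfile (Fintype.card n) ν (k ^ Fintype.card n * E.det)
        (k⁻¹ * ((y - μ) ⬝ᵥ (E⁻¹ *ᵥ (y - μ)))) := by
  have := invertibleOfNonzero hk
  rw [tDens_eq_tDensProfile, det_smul, Matrix.inv_smul E k hE, invOf_eq_inv, smul_mulVec,
    dotProduct_smul, smul_eq_mul]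

theorem tConst_pos (d : ℕ) {ν : ℝ} (hν : 2 < ν) : 0 < tConst d ν := by
  have : 0 < ν - 2 := by linarith
  unfold tConst
  positivity

theorem log_tConst_add_two (d : ℕ) {a : ℝ} (ha : 0 < a) :
    Real.log (tConst d (a + 2)) =
      Real.log (Real.Gamma ((d + (a + 2)) / 2)) - (d / 2 * Real.log Real.pi + d / 2 * Real.log a)
        - Real.log (Real.Gamma ((a + 2) / 2)) := by
  unfold tConst
  simp (disch := positivity) only [Real.log_div, Real.log_mul, Real.log_sqrt, Real.log_pow,
    add_sub_cancel_right]
  ring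

theorem tDensProfile_add (d₁ d₂ : ℕ) {ν δ₁ δ₂ q₁ q₂ : ℝ} (hν : 2 < ν) (hδ₁ : 0 < δ₁)
    (hδ₂ : 0 < δ₂) (hq₁ : 0 ≤ q₁) (hq₂ : 0 ≤ q₂) :
    let k := (ν - 2 + q₂) / (ν - 2 + d₂)
    tDensProfile (d₁ + d₂) ν (δ₂ * δ₁) (q₁ + q₂) =
      tDensProfile d₁ (ν + d₂) (k ^ d₁ * δ₁) (k⁻¹ * q₁) * tDensProfile d₂ ν δ₂ q₂ := by
  have h₀ := tConst_pos (d₁ + d₂) hν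
  have h₁ := tConst_pos d₁ (by linarith [(Nat.cast_nonneg d₂ : (0 : ℝ) ≤ d₂)] : 2 < ν + d₂)
  have h₂ := tConst_pos d₂ hν
  -- with `ν = a + 2`, `positivity` sees that every base below is positive
  obtain ⟨a, ha, rfl⟩ : ∃ a, 0 < a ∧ ν = a + 2 := ⟨ν - 2, by linarith, by ring⟩
  intro k
  have hk : k = (a + q₂) / (a + d₂) := by simp only [k, add_sub_cancel_right]
  rw [show a + 2 + d₂ = (a + d₂) + 2 by ring] at h₁ ⊢
  rw [hk]
  unfold tDensProfile
  simp only [add_sub_cancel_right]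
  have e₀ : 1 + (q₁ + q₂) / a = (a + q₂ + q₁) / a := by field_simp; ring
  have e₁ : 1 + ((a + q₂) / (a + d₂))⁻¹ * q₁ / (a + d₂) = (a + q₂ + q₁) / (a + q₂) := by
    field_simp
  have e₂ : 1 + q₂ / a = (a + q₂) / a := by field_simp
  have g₀ : ((↑(d₁ + d₂) : ℝ) + (a + 2)) / 2 = (d₁ + (a + d₂ + 2)) / 2 := by push_cast; ring
  have g₁ : ((d₂ : ℝ) + (a + 2)) / 2 = (a + d₂ + 2) / 2 := by ring
  rw [e₀, e₁, e₂]
  apply Real.log_injOn_pos (Set.mem_Ioi.mpr (by positivity)) (Set.mem_Ioi.mpr (by positivity))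
  simp (disch := positivity) only [Real.log_mul, Real.log_rpow, Real.log_div, Real.log_pow,
    log_tConst_add_two, g₀, g₁]
  push_cast
  ring

theorem tDens_factorization_general (d₁ d₂ : ℕ)
    (μ₁ : Fin d₁ → ℝ) (μ₂ : Fin d₂ → ℝ) (ν : ℝ) (hν : 2 < ν)
    (S : Matrix (Fin d₁ ⊕ Fin d₂) (Fin d₁ ⊕ Fin d₂) ℝ) (hSpd : S.PosDef) :
    ∀ x₂ : Fin d₂ → ℝ,
      let μc : Fin d₁ → ℝ := μ₁ + S.toBlocks₁₂ *ᵥ ((S.toBlocks₂₂)⁻¹ *ᵥ (x₂ - μ₂))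
      let Sc : Matrix (Fin d₁) (Fin d₁) ℝ :=
        ((ν - 2 + ((x₂ - μ₂) ⬝ᵥ ((S.toBlocks₂₂)⁻¹ *ᵥ (x₂ - μ₂)))) / (ν - 2 + (d₂ : ℝ))) •
          (S.toBlocks₁₁ - S.toBlocks₁₂ * (S.toBlocks₂₂)⁻¹ * (S.toBlocks₁₂)ᵀ)
      Sc.IsSymm ∧ Sc.PosDef ∧
        ∀ x₁ : Fin d₁ → ℝ,
          tDens (Sum.elim μ₁ μ₂) S ν (Sum.elim x₁ x₂)
            = tDens μc Sc (ν + (d₂ : ℝ)) x₁ * tDens μ₂ S.toBlocks₂₂ ν x₂ := by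
  intro x₂ μc Sc
  set D := S.toBlocks₂₂
  set E := S.toBlocks₁₁ - S.toBlocks₁₂ * D⁻¹ * S.toBlocks₁₂ᵀ
  have hD : D.PosDef := hSpd.toBlocks₂₂
  have hE : E.PosDef := hSpd.schur_complement_toBlocks
  set q₂ := (x₂ - μ₂) ⬝ᵥ (D⁻¹ *ᵥ (x₂ - μ₂))
  set k := (ν - 2 + q₂) / (ν - 2 + d₂)
  have hk : 0 < k := by
    have := hD.dotProduct_inv_mulVec_nonneg (x₂ - μ₂)
    exact div_pos (by linarith) (by linarith [(Nat.cast_nonneg d₂ : (0 : ℝ) ≤ d₂)])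
  have hSc : Sc.PosDef := hE.smul hk
  refine ⟨isHermitian_iff_isSymm.1 hSc.isHermitian, hSc, fun x₁ => ?_⟩
  set q₁ := (x₁ - μc) ⬝ᵥ (E⁻¹ *ᵥ (x₁ - μc))
  have hquad : (Sum.elim x₁ x₂ - Sum.elim μ₁ μ₂) ⬝ᵥ (S⁻¹ *ᵥ (Sum.elim x₁ x₂ - Sum.elim μ₁ μ₂))
      = q₁ + q₂ := by
    rw [← Sum.elim_sub_sub, hSpd.dotProduct_inv_mulVec_sumElim, ← sub_add_eq_sub_sub]
  calc tDens (Sum.elim μ₁ μ₂) S ν (Sum.elim x₁ x₂)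
      = tDensProfile (d₁ + d₂) ν (D.det * E.det) (q₁ + q₂) := by
        rw [tDens_eq_tDensProfile, hquad, hSpd.det_eq_det_toBlocks₂₂_mul, Fintype.card_sum,
          Fintype.card_fin, Fintype.card_fin]
    _ = tDensProfile d₁ (ν + d₂) (k ^ d₁ * E.det) (k⁻¹ * q₁) * tDensProfile d₂ ν D.det q₂ :=
        tDensProfile_add d₁ d₂ hν hE.det_pos hD.det_pos
          (hE.dotProduct_inv_mulVec_nonneg _) (hD.dotProduct_inv_mulVec_nonneg _)
    _ = tDens μc Sc (ν + d₂) x₁ * tDens μ₂ D ν x₂ := by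
        rw [show Sc = k • E from rfl, tDens_smul μc hE.det_pos.ne'.isUnit hk.ne',
          tDens_eq_tDensProfile, Fintype.card_fin, Fintype.card_fin]

/-- Conditional/marginal factorization of the multivariate Student's t density: the joint
density factorizes into the conditional t density of the first block given the second one
(with ν + d₂ degrees of freedom) times the marginal t density of the second block, and the
conditional covariance matrix is symmetric positive definite. -/
theorem tDens_factorization (d₁ d₂ : ℕ) (hd₁ : 1 ≤ d₁) (hd₂ : 1 ≤ d₂)
    (μ₁ : Fin d₁ → ℝ) (μ₂ : Fin d₂ → ℝ) (ν : ℝ) (hν : 2 < ν)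
    (S : Matrix (Fin d₁ ⊕ Fin d₂) (Fin d₁ ⊕ Fin d₂) ℝ) (hSsymm : S.IsSymm) (hSpd : S.PosDef) :
    ∀ x₂ : Fin d₂ → ℝ,
      let μc : Fin d₁ → ℝ := μ₁ + S.toBlocks₁₂ *ᵥ ((S.toBlocks₂₂)⁻¹ *ᵥ (x₂ - μ₂))
      let Sc : Matrix (Fin d₁) (Fin d₁) ℝ :=
        ((ν - 2 + ((x₂ - μ₂) ⬝ᵥ ((S.toBlocks₂₂)⁻¹ *ᵥ (x₂ - μ₂)))) / (ν - 2 + (d₂ : ℝ))) •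
          (S.toBlocks₁₁ - S.toBlocks₁₂ * (S.toBlocks₂₂)⁻¹ * (S.toBlocks₁₂)ᵀ)
      Sc.IsSymm ∧ Sc.PosDef ∧
        ∀ x₁ : Fin d₁ → ℝ,
          tDens (Sum.elim μ₁ μ₂) S ν (Sum.elim x₁ x₂)
            = tDens μc Sc (ν + (d₂ : ℝ)) x₁ * tDens μ₂ S.toBlocks₂₂ ν x₂ :=
  tDens_factorization_general d₁ d₂ μ₁ μ₂ ν hν S hSpd
end

section
/- Let A be an n×n real matrix such that every complex eigenvalue z of A (i.e., every root of its characteristic polynomial over ℂ) satisfies |z| < 1. Then the n²×n² matrix I_{n²} − A ⊗ A, where ⊗ denotes the Kronecker product, is invertible. -/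
/-!
Since `(B ⊗ₖ C) *ᵥ vec X = vec (C * X * Bᵀ)`, a kernel vector of `1 - A ⊗ₖ A` is a nonzero solution
of the Stein equation `A * X * Aᵀ = X`. Left multiplication by `A` preserves the solution space, so
over `ℂ` it has an eigenvector `Y` there: `A * Y = a • Y`, whence `Y * Aᵀ = a⁻¹ • Y`, and `a⁻¹` is an
eigenvalue of `A` as well. But `|a| < 1` and `|a⁻¹| < 1` cannot both hold.
-/

open Matrix
open scoped Kronecker

namespace Matrix

variable {K m n : Type*}

theorem mem_spectrum_of_mul_eq_smul [CommRing K] [Fintype m] [DecidableEq m] {B : Matrix m m K}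
    {X : Matrix m n K} (hX : X ≠ 0) {a : K} (h : B * X = a • X) : a ∈ spectrum K B := by
  rw [spectrum.mem_iff, isUnit_iff_isUnit_det]
  intro hunit
  refine hX ?_
  calc X = (algebraMap K _ a - B)⁻¹ * (algebraMap K _ a - B) * X := by
        rw [nonsing_inv_mul _ hunit, Matrix.one_mul]
    _ = 0 := by
        rw [Matrix.mul_assoc, Matrix.sub_mul, h, Algebra.algebraMap_eq_smul_one, Matrix.smul_mul,
          Matrix.one_mul, sub_self, Matrix.mul_zero]

theorem mem_spectrum_of_mul_transpose_eq_smul [CommRing K] [Fintype n] [DecidableEq n]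
    {C : Matrix n n K} {X : Matrix m n K} (hX : X ≠ 0) {a : K} (h : X * Cᵀ = a • X) :
    a ∈ spectrum K C :=
  mem_spectrum_of_mul_eq_smul (X := Xᵀ) (mt transpose_eq_zero.mp hX) <| by
    rw [← transpose_transpose C, ← transpose_mul, h, transpose_smul]

def steinKernel [Field K] [Fintype m] [Fintype n] (B : Matrix m m K) (C : Matrix n n K) :
    Submodule K (Matrix m n K) where
  carrier := {X | B * X * Cᵀ = X}
  add_mem' {X Y} hX hY := by simp_all [Matrix.mul_add, Matrix.add_mul]
  zero_mem' := by simp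
  smul_mem' c X hX := by simp_all

theorem mem_steinKernel [Field K] [Fintype m] [Fintype n] {B : Matrix m m K} {C : Matrix n n K}
    {X : Matrix m n K} : X ∈ steinKernel B C ↔ B * X * Cᵀ = X := Iff.rfl

theorem eq_zero_of_mul_mul_transpose_eq_self [Field K] [IsAlgClosed K] [Fintype m] [DecidableEq m]
    [Fintype n] [DecidableEq n] {B : Matrix m m K} {C : Matrix n n K}
    (hBC : ∀ a ∈ spectrum K B, ∀ b ∈ spectrum K C, a * b ≠ 1) {X : Matrix m n K}
    (hX : B * X * Cᵀ = X) : X = 0 := by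
  by_contra hX0
  have : Nontrivial (steinKernel B C) := Submodule.nontrivial_iff_ne_bot.mpr
    ((Submodule.ne_bot_iff _).mpr ⟨X, hX, hX0⟩)
  let L : Module.End K (steinKernel B C) := (mulLeftLinearMap n K B).restrict fun Y hY => by
    simp only [mem_steinKernel, mulLeftLinearMap_apply] at hY ⊢
    rw [Matrix.mul_assoc, hY]
  obtain ⟨a, ha⟩ := L.exists_eigenvalue
  obtain ⟨⟨Y, hY⟩, hYeig⟩ := ha.exists_hasEigenvector
  have hY0 : Y ≠ 0 := fun h => hYeig.2 (Subtype.ext h)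
  have hBY : B * Y = a • Y := congrArg Subtype.val hYeig.apply_eq_smul
  have hYC : a • (Y * Cᵀ) = Y := by rw [← Matrix.smul_mul, ← hBY]; exact hY
  have ha0 : a ≠ 0 := by rintro rfl; simp [eq_comm, hY0] at hYC
  exact hBC a (mem_spectrum_of_mul_eq_smul hY0 hBY) a⁻¹
    (mem_spectrum_of_mul_transpose_eq_smul hY0 ((eq_inv_smul_iff₀ ha0).mpr hYC))
    (mul_inv_cancel₀ ha0)

theorem isUnit_one_sub_kronecker [Field K] [IsAlgClosed K] [Fintype m] [DecidableEq m]
    [Fintype n] [DecidableEq n] {B : Matrix m m K} {C : Matrix n n K}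
    (hBC : ∀ a ∈ spectrum K B, ∀ b ∈ spectrum K C, a * b ≠ 1) :
    IsUnit (1 - B ⊗ₖ C) := by
  rw [isUnit_iff_isUnit_det, isUnit_iff_ne_zero, Ne, ← exists_mulVec_eq_zero_iff]
  rintro ⟨v, hv0, hv⟩
  obtain ⟨X, rfl⟩ := vec_bijective.surjective v
  rw [sub_mulVec, one_mulVec, kronecker_mulVec_vec, sub_eq_zero, vec_inj] at hv
  exact hv0 <| vec_eq_zero_iff.mpr <|
    eq_zero_of_mul_mul_transpose_eq_self (fun a ha b hb => mul_comm a b ▸ hBC b hb a ha) hv.symm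

theorem isUnit_map_iff {R S : Type*} [CommRing R] [CommRing S] [Fintype m] [DecidableEq m]
    (f : R →+* S) [IsLocalHom f] (M : Matrix m m R) : IsUnit (M.map f) ↔ IsUnit M := by
  rw [isUnit_iff_isUnit_det, isUnit_iff_isUnit_det, ← RingHom.mapMatrix_apply, ← RingHom.map_det,
    _root_.isUnit_map_iff]

end Matrix

theorem one_sub_kronecker_isUnit_general (n : ℕ) (A : Matrix (Fin n) (Fin n) ℝ)
    (hA : ∀ z : ℂ, ((A.map Complex.ofReal).charpoly).IsRoot z → ‖z‖ < 1) :
    IsUnit ((1 : Matrix (Fin n × Fin n) (Fin n × Fin n) ℝ)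
      - Matrix.kroneckerMap (· * ·) A A) := by
  set B := A.map Complex.ofReal
  have hspec (z : ℂ) (hz : z ∈ spectrum ℂ B) : ‖z‖ < 1 :=
    hA z (mem_spectrum_iff_isRoot_charpoly.mp hz)
  have hmap : (1 - A ⊗ₖ A).map Complex.ofRealHom = 1 - B ⊗ₖ B := by
    ext
    simp [B, one_apply, apply_ite]
  rw [← Matrix.isUnit_map_iff Complex.ofRealHom, hmap]
  refine isUnit_one_sub_kronecker fun a ha b hb hab => ?_
  have : ‖a * b‖ < 1 := by
    rw [norm_mul]
    exact mul_lt_one_of_nonneg_of_lt_one_left (norm_nonneg a) (hspec a ha) (hspec b hb).le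
  rw [hab, norm_one] at this
  exact lt_irrefl 1 this

/-- If every complex eigenvalue of the real n×n matrix A (i.e., every root of its
characteristic polynomial over ℂ) has modulus strictly less than one, then the n²×n² matrix
I − A ⊗ A (with ⊗ the Kronecker product) is invertible. -/
theorem one_sub_kronecker_isUnit (n : ℕ) (hn : 1 ≤ n) (A : Matrix (Fin n) (Fin n) ℝ)
    (hA : ∀ z : ℂ, ((A.map Complex.ofReal).charpoly).IsRoot z → ‖z‖ < 1) :
    IsUnit ((1 : Matrix (Fin n × Fin n) (Fin n × Fin n) ℝ)
      - Matrix.kroneckerMap (· * ·) A A) :=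
  one_sub_kronecker_isUnit_general n A hA
end

section
/- Let d ≥ 1 and M ≥ 2. Let W and W̃ be invertible d×d real matrices and, for m = 2, ..., M, let Λ_m = diag(λ_{m1}, ..., λ_{md}) be diagonal d×d matrices with strictly positive diagonal entries. Suppose WWᵀ = W̃W̃ᵀ and WΛ_mWᵀ = W̃Λ_mW̃ᵀ for all m = 2, ..., M, and suppose the eigenvalue distinctness condition holds: for all i ≠ j in {1, ..., d} there exists m ∈ {2, ..., M} with λ_{mi} ≠ λ_{mj}. Then W̃ = W D for some diagonal d×d matrix D with D² = I_d (i.e., W̃ is obtained from W by changing the signs of some columns). -/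
open Matrix

/-- Uniqueness of the W matrix up to column sign changes: if invertible W and W̃ satisfy
WWᵀ = W̃W̃ᵀ and WΛ_mWᵀ = W̃Λ_mW̃ᵀ for the diagonal matrices Λ_m, m = 2, ..., M (indexed here by
`Fin (M - 1)`), with strictly positive diagonals, and for all i ≠ j some Λ_m has distinct
(i, i) and (j, j) entries, then W̃ = W D for a diagonal D with D² = I. -/
theorem W_unique_up_to_sign (d M : ℕ) (hd : 1 ≤ d) (hM : 2 ≤ M)
    (W Wt : Matrix (Fin d) (Fin d) ℝ) (hW : IsUnit W.det) (hWt : IsUnit Wt.det)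
    (lam : Fin (M - 1) → Fin d → ℝ) (hpos : ∀ m i, 0 < lam m i)
    (h1 : W * Wᵀ = Wt * Wtᵀ)
    (h2 : ∀ m : Fin (M - 1),
      W * Matrix.diagonal (lam m) * Wᵀ = Wt * Matrix.diagonal (lam m) * Wtᵀ)
    (hdist : ∀ i j : Fin d, i ≠ j → ∃ m : Fin (M - 1), lam m i ≠ lam m j) :
    ∃ D : Matrix (Fin d) (Fin d) ℝ,
      D.IsDiag ∧ D * D = 1 ∧ Wt = W * D := by
  set P : Matrix (Fin d) (Fin d) ℝ := W⁻¹ * Wt with hP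
  have hWinv : W⁻¹ * W = 1 := nonsing_inv_mul W hW
  have hWTdet : IsUnit (Wᵀ).det := by rwa [det_transpose]
  have hWTinv : Wᵀ * (Wᵀ)⁻¹ = 1 := mul_nonsing_inv _ hWTdet
  have hWP : W * P = Wt := by
    rw [hP, ← mul_assoc, mul_nonsing_inv W hW, one_mul]
  have hPt : Pᵀ = Wtᵀ * (Wᵀ)⁻¹ := by
    rw [hP, transpose_mul, transpose_nonsing_inv]
  have hPPt : P * Pᵀ = 1 := by
    rw [hP, hPt, mul_assoc, ← mul_assoc Wt, ← h1, ← mul_assoc, ← mul_assoc, hWinv, one_mul,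
      hWTinv]
  have hPtP : Pᵀ * P = 1 := mul_eq_one_comm.mp hPPt
  have hcomm : ∀ m, P * Matrix.diagonal (lam m) = Matrix.diagonal (lam m) * P := by
    intro m
    have key : P * Matrix.diagonal (lam m) * Pᵀ = Matrix.diagonal (lam m) := by
      rw [hP, hPt]
      calc W⁻¹ * Wt * Matrix.diagonal (lam m) * (Wtᵀ * (Wᵀ)⁻¹)
          = W⁻¹ * (Wt * Matrix.diagonal (lam m) * Wtᵀ) * (Wᵀ)⁻¹ := by
            simp only [mul_assoc]
        _ = W⁻¹ * (W * Matrix.diagonal (lam m) * Wᵀ) * (Wᵀ)⁻¹ := by rw [h2 m]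
        _ = Matrix.diagonal (lam m) := by
            rw [← mul_assoc, ← mul_assoc, hWinv, one_mul, mul_assoc, hWTinv, mul_one]
    calc P * Matrix.diagonal (lam m)
        = P * Matrix.diagonal (lam m) * (Pᵀ * P) := by rw [hPtP, mul_one]
      _ = (P * Matrix.diagonal (lam m) * Pᵀ) * P := by simp only [mul_assoc]
      _ = Matrix.diagonal (lam m) * P := by rw [key]
  have hdiag : P.IsDiag := by
    intro i j hij
    obtain ⟨m, hm⟩ := hdist i j hij
    have := congrFun (congrFun (hcomm m) i) j
    simp only [Matrix.mul_diagonal, Matrix.diagonal_mul] at this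
    by_contra hne
    exact hm (mul_right_cancel₀ hne (by linarith [this])).symm
  have hsymm : Pᵀ = P := by
    ext i j
    by_cases hij : i = j
    · subst hij; rfl
    · rw [transpose_apply, hdiag hij, hdiag (Ne.symm hij)]
  exact ⟨P, hdiag, by rw [hsymm] at hPtP; exact hPtP, hWP.symm⟩
end

section
/- Let d ≥ 1 and M ≥ 1. Let W be an invertible d×d real matrix, let Λ₁ = I_d and, for m = 2, ..., M, let Λ_m be diagonal d×d matrices with strictly positive diagonal entries; set Ω_m = W Λ_m Wᵀ. Let w₁, ..., w_M be strictly positive reals, set D = Σ_{m=1}^M w_m Λ_m (a diagonal matrix with strictly positive diagonal), and set B = W D^{1/2} where D^{1/2} is the diagonal matrix of entrywise square roots. Then: (a) B Bᵀ = Σ_{m=1}^M w_m Ω_m; (b) for every m, B⁻¹ Ω_m (B⁻¹)ᵀ = Λ_m D⁻¹, which is diagonal; and (c) Σ_{m=1}^M w_m B⁻¹ Ω_m (B⁻¹)ᵀ = I_d. -/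
open Matrix

/-!
Write `D = Σ_m w_m Λ_m` and `S = D^{1/2}`, so `B = W S`. Since diagonal matrices commute,
`B C Bᵀ = W (C D) Wᵀ` for every diagonal `C`; hence `Ω_m = B (Λ_m D⁻¹) Bᵀ`, and conjugating by the
invertible `B` turns every `Ω_m` into the diagonal matrix `Λ_m D⁻¹`. Summing with weights `w_m`
gives `D D⁻¹ = 1`.
-/

namespace Matrix

variable {n : Type*} [DecidableEq n]

theorem sum_smul_diagonal {ι R : Type*} [Semiring R] (s : Finset ι) (w : ι → R) (f : ι → n → R) :
    ∑ m ∈ s, w m • diagonal (f m) = diagonal fun i => ∑ m ∈ s, w m * f m i := by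
  ext i j
  rcases eq_or_ne i j with rfl | hij <;> simp [sum_apply, *]

variable [Fintype n]

theorem mul_diagonal_mul_diagonal_mul_transpose {R : Type*} [CommSemiring R]
    (W : Matrix n n R) (s c : n → R) :
    W * diagonal s * diagonal c * (W * diagonal s)ᵀ = W * diagonal (c * (s * s)) * Wᵀ := by
  have hscs : diagonal s * diagonal c * diagonal s = diagonal (c * (s * s)) := by
    rw [diagonal_mul_diagonal, diagonal_mul_diagonal]
    congr 1
    ext i
    exact (mul_rotate _ _ _).trans (mul_assoc _ _ _)
  rw [transpose_mul, diagonal_transpose, ← hscs]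
  simp only [Matrix.mul_assoc]

theorem inv_mul_mul_transpose_mul_inv_transpose {R : Type*} [CommRing R] {B : Matrix n n R}
    (hB : IsUnit B.det) (Y : Matrix n n R) : B⁻¹ * (B * Y * Bᵀ) * B⁻¹ᵀ = Y := by
  rw [← Matrix.mul_assoc, nonsing_inv_mul_cancel_left _ _ hB, transpose_nonsing_inv,
    mul_nonsing_inv_cancel_right _ _ (by rwa [det_transpose])]

theorem inv_diagonal_of_ne_zero {K : Type*} [Field K] {v : n → K} (hv : ∀ i, v i ≠ 0) :
    (diagonal v)⁻¹ = diagonal v⁻¹ :=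
  inv_eq_left_inv <| by
    rw [diagonal_mul_diagonal, ← diagonal_one]
    exact congrArg diagonal (funext fun i => inv_mul_cancel₀ (hv i))

end Matrix

theorem impact_matrix_simultaneous_diagonalization_general (d M : ℕ) (hM : 1 ≤ M)
    (W : Matrix (Fin d) (Fin d) ℝ) (hW : IsUnit W.det)
    (lam : Fin M → Fin d → ℝ)
    (hpos : ∀ m i, 0 < lam m i)
    (w : Fin M → ℝ) (hw : ∀ m, 0 < w m) :
    let Ω : Fin M → Matrix (Fin d) (Fin d) ℝ := fun m => W * Matrix.diagonal (lam m) * Wᵀ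
    let Dfun : Fin d → ℝ := fun i => ∑ m, w m * lam m i
    let B : Matrix (Fin d) (Fin d) ℝ :=
      W * Matrix.diagonal (fun i => Real.sqrt (Dfun i))
    (B * Bᵀ = ∑ m, w m • Ω m) ∧
    (∀ m, B⁻¹ * Ω m * (B⁻¹)ᵀ = Matrix.diagonal (lam m) * (Matrix.diagonal Dfun)⁻¹ ∧
      (B⁻¹ * Ω m * (B⁻¹)ᵀ).IsDiag) ∧
    (∑ m, w m • (B⁻¹ * Ω m * (B⁻¹)ᵀ) = 1) := by
  intro Ω Dfun B
  have hD : ∀ i, 0 < Dfun i := fun i =>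
    Finset.sum_pos (fun m _ => mul_pos (hw m) (hpos m i)) ⟨⟨0, hM⟩, Finset.mem_univ _⟩
  have hB : IsUnit B.det := by
    rw [det_mul, det_diagonal]
    exact hW.mul <| isUnit_iff_ne_zero.mpr <|
      Finset.prod_ne_zero_iff.mpr fun i _ => (Real.sqrt_pos.mpr (hD i)).ne'
  have hsqrt : (fun i => √(Dfun i)) * (fun i => √(Dfun i)) = Dfun :=
    funext fun i => Real.mul_self_sqrt (hD i).le
  have hBCB : ∀ c, B * diagonal c * Bᵀ = W * diagonal (c * Dfun) * Wᵀ := fun c => by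
    rw [mul_diagonal_mul_diagonal_mul_transpose, hsqrt]
  have hΩ : ∀ m, Ω m = B * diagonal (lam m * Dfun⁻¹) * Bᵀ := fun m => by
    rw [hBCB, show lam m * Dfun⁻¹ * Dfun = lam m from
      funext fun i => inv_mul_cancel_right₀ (hD i).ne' _]
  have hcong : ∀ m, B⁻¹ * Ω m * B⁻¹ᵀ = diagonal (lam m * Dfun⁻¹) := fun m => by
    rw [hΩ, inv_mul_mul_transpose_mul_inv_transpose hB]
  refine ⟨?_, fun m => ⟨?_, ?_⟩, ?_⟩
  · calc B * Bᵀ = W * diagonal Dfun * Wᵀ := by simpa using hBCB 1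
      _ = W * (∑ m, w m • diagonal (lam m)) * Wᵀ := by rw [sum_smul_diagonal]
      _ = ∑ m, w m • Ω m := by
        simp only [Matrix.mul_sum, Matrix.sum_mul, Matrix.mul_smul, Matrix.smul_mul]
        rfl
  · rw [hcong, inv_diagonal_of_ne_zero fun i => (hD i).ne', diagonal_mul_diagonal]
    rfl
  · rw [hcong]
    exact isDiag_diagonal _
  · simp only [hcong, sum_smul_diagonal, ← diagonal_one]
    congr 1
    ext i
    simp only [Pi.mul_apply, Pi.inv_apply, ← mul_assoc, ← Finset.sum_mul]
    exact mul_inv_cancel₀ (hD i).ne'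

/-- Properties of the impact matrix B = W D^{1/2} with D = Σ_m w_m Λ_m, Λ₁ = I (regime 1 is
indexed by `⟨0, hM⟩`), Λ_m diagonal with strictly positive diagonals, w_m > 0, and
Ω_m = W Λ_m Wᵀ:
(a) B Bᵀ = Σ_m w_m Ω_m;
(b) B⁻¹ Ω_m (B⁻¹)ᵀ = Λ_m D⁻¹, which is diagonal;
(c) Σ_m w_m B⁻¹ Ω_m (B⁻¹)ᵀ = I. -/
theorem impact_matrix_simultaneous_diagonalization (d M : ℕ) (hd : 1 ≤ d) (hM : 1 ≤ M)
    (W : Matrix (Fin d) (Fin d) ℝ) (hW : IsUnit W.det)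
    (lam : Fin M → Fin d → ℝ) (hlam1 : lam ⟨0, hM⟩ = fun _ => (1 : ℝ))
    (hpos : ∀ m i, 0 < lam m i)
    (w : Fin M → ℝ) (hw : ∀ m, 0 < w m) :
    let Ω : Fin M → Matrix (Fin d) (Fin d) ℝ := fun m => W * Matrix.diagonal (lam m) * Wᵀ
    let Dfun : Fin d → ℝ := fun i => ∑ m, w m * lam m i
    let B : Matrix (Fin d) (Fin d) ℝ :=
      W * Matrix.diagonal (fun i => Real.sqrt (Dfun i))
    (B * Bᵀ = ∑ m, w m • Ω m) ∧
    (∀ m, B⁻¹ * Ω m * (B⁻¹)ᵀ = Matrix.diagonal (lam m) * (Matrix.diagonal Dfun)⁻¹ ∧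
      (B⁻¹ * Ω m * (B⁻¹)ᵀ).IsDiag) ∧
    (∑ m, w m • (B⁻¹ * Ω m * (B⁻¹)ᵀ) = 1) :=
  impact_matrix_simultaneous_diagonalization_general d M hM W hW lam hpos w hw
end
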